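/- arXiv:2501.11913 — 2 statements merged into one kernel-verified Lean document; each statement's English description precedes it below -/
import Mathlib

section
/- Define Λ(x) = ln(max(|x|, 1)) on ℝ^d. Let p : ℝ^d → [0,∞) be a probability density with ∫_{ℝ^d} p(x)Λ(x) dx < ∞, and let k : ℝ^d → [0,∞) be integrable with ∫_{ℝ^d} k(y) dy = 1 and ∫_{ℝ^d} |y| k(y) dy < ∞. Then ∫_{ℝ^d} (p * k)(x)·Λ(x) dx ≤ ∫_{ℝ^d} p(x)Λ(x) dx + ∫_{ℝ^d} |y| k(y) dy, where (p * k)(x) = ∫_{ℝ^d} k(x−y)p(y) dy. -/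
/-!
Since `max ‖x‖ 1 ≤ max ‖y‖ 1 + ‖x - y‖ ≤ max ‖y‖ 1 · exp ‖x - y‖`, the weight
`Λ = log (max ‖·‖ 1)` satisfies `Λ x ≤ Λ y + ‖x - y‖`. Inserting this into
`∫ (p * k) Λ = ∫∫ k (x - y) p y Λ x dy dx` and integrating first in `x` by Tonelli and
translation invariance gives `∫ k · ∫ p Λ + ∫ p · ∫ ‖z‖ k z`, and `∫ k = ∫ p = 1`.
-/

open MeasureTheory
open scoped ENNReal

lemma Real.log_max_norm_one_le {E : Type*} [SeminormedAddCommGroup E] (x y : E) :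
    Real.log (max ‖x‖ 1) ≤ Real.log (max ‖y‖ 1) + ‖x - y‖ := by
  have hy : 0 < max ‖y‖ 1 := lt_max_of_lt_right one_pos
  have hx : max ‖x‖ 1 ≤ max ‖y‖ 1 * Real.exp ‖x - y‖ :=
    calc max ‖x‖ 1 ≤ max ‖y‖ 1 + ‖x - y‖ := by
          refine max_le ?_ (by linarith [le_max_right ‖y‖ 1, norm_nonneg (x - y)])
          linarith [le_max_left ‖y‖ 1, norm_sub_norm_le x y]
      _ ≤ max ‖y‖ 1 * (1 + ‖x - y‖) := by nlinarith [le_max_right ‖y‖ 1, norm_nonneg (x - y)]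
      _ ≤ max ‖y‖ 1 * Real.exp ‖x - y‖ := by
          gcongr; linarith [Real.add_one_le_exp ‖x - y‖]
  calc Real.log (max ‖x‖ 1) ≤ Real.log (max ‖y‖ 1 * Real.exp ‖x - y‖) :=
        Real.log_le_log (lt_max_of_lt_right one_pos) hx
    _ = Real.log (max ‖y‖ 1) + ‖x - y‖ := by
        rw [Real.log_mul hy.ne' (Real.exp_pos _).ne', Real.log_exp]

lemma ENNReal.ofReal_integral_le_lintegral_ofReal {α : Type*} [MeasurableSpace α]
    {μ : Measure α} {f : α → ℝ} (hf : ∀ x, 0 ≤ f x) :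
    ENNReal.ofReal (∫ x, f x ∂μ) ≤ ∫⁻ x, ENNReal.ofReal (f x) ∂μ := by
  rw [← Real.enorm_of_nonneg (integral_nonneg hf)]
  simp_rw [← Real.enorm_of_nonneg (hf _)]
  exact enorm_integral_le_lintegral_enorm f

lemma lintegral_ofReal_eq_one_of_integral_eq_one {α : Type*} [MeasurableSpace α]
    {μ : Measure α} {f : α → ℝ} (hf : ∀ x, 0 ≤ f x) (hfm : AEStronglyMeasurable f μ)
    (h : ∫ x, f x ∂μ = 1) :
    ∫⁻ x, ENNReal.ofReal (f x) ∂μ = 1 := by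
  rwa [integral_eq_lintegral_of_nonneg_ae (.of_forall hf) hfm, ENNReal.toReal_eq_one_iff] at h

section Translation

variable {G : Type*} [MeasurableSpace G] [AddGroup G] [MeasurableAdd G] [MeasurableSub₂ G]
  {μ : Measure G} [SFinite μ] [μ.IsAddRightInvariant]

lemma lintegral_lintegral_sub_mul {K F : G → ℝ≥0∞} (hK : Measurable K) (hF : Measurable F) :
    ∫⁻ x, ∫⁻ y, K (x - y) * F y ∂μ ∂μ = (∫⁻ z, K z ∂μ) * ∫⁻ y, F y ∂μ := by
  rw [lintegral_lintegral_swap ((hK.comp measurable_sub).aemeasurable.mul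
    (hF.comp measurable_snd).aemeasurable), ← lintegral_const_mul _ hF]
  refine lintegral_congr fun y => ?_
  rw [lintegral_mul_const (f := fun x => K (x - y)) _ (hK.comp (measurable_sub_const y)),
    lintegral_sub_right_eq_self K y]

lemma lintegral_lintegral_sub_mul_mul_le {K P L g : G → ℝ≥0∞} (hK : Measurable K)
    (hP : Measurable P) (hL : Measurable L) (hg : Measurable g)
    (hLg : ∀ x y, L x ≤ L y + g (x - y)) :
    ∫⁻ x, (∫⁻ y, K (x - y) * P y ∂μ) * L x ∂μ ≤
      (∫⁻ z, K z ∂μ) * (∫⁻ y, P y * L y ∂μ) + (∫⁻ z, K z * g z ∂μ) * ∫⁻ y, P y ∂μ :=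
  calc ∫⁻ x, (∫⁻ y, K (x - y) * P y ∂μ) * L x ∂μ
      = ∫⁻ x, ∫⁻ y, K (x - y) * P y * L x ∂μ ∂μ := by
        refine lintegral_congr fun x => (lintegral_mul_const _ ?_).symm
        exact (hK.comp (measurable_const.sub measurable_id)).mul hP
    _ ≤ ∫⁻ x, ∫⁻ y, K (x - y) * (P * L) y + (K * g) (x - y) * P y ∂μ ∂μ := by
        gcongr with x y
        calc K (x - y) * P y * L x ≤ K (x - y) * P y * (L y + g (x - y)) := by gcongr; exact hLg x y
          _ = _ := by simp only [Pi.mul_apply]; ring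
    _ = _ := by
        have hsummand : Measurable fun q : G × G => K (q.1 - q.2) * (P * L) q.2 :=
          (hK.comp measurable_sub).mul ((hP.mul hL).comp measurable_snd)
        rw [lintegral_congr fun x => lintegral_add_left (f := fun y => K (x - y) * (P * L) y)
            (hsummand.comp measurable_prodMk_left) _,
          lintegral_add_left (f := fun x => ∫⁻ y, K (x - y) * (P * L) y ∂μ)
            hsummand.lintegral_prod_right', lintegral_lintegral_sub_mul hK (hP.mul hL),
          lintegral_lintegral_sub_mul (hK.mul hg) hP]
        rfl

end Translation

theorem stmt_14_general (d : ℕ)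
    (p k : EuclideanSpace ℝ (Fin d) → ℝ)
    (hpm : Measurable p) (hkm : Measurable k)
    (hp0 : ∀ x, 0 ≤ p x) (hk0 : ∀ y, 0 ≤ k y)
    (hp1 : (∫ x, p x) = 1)
    (hk1 : (∫ y, k y) = 1) :
    (∫⁻ x, ENNReal.ofReal ((∫ y, k (x - y) * p y) * Real.log (max ‖x‖ 1))) ≤
      (∫⁻ x, ENNReal.ofReal (p x * Real.log (max ‖x‖ 1))) +
      ∫⁻ y, ENNReal.ofReal (‖y‖ * k y) := by
  have hk := lintegral_ofReal_eq_one_of_integral_eq_one hk0 hkm.aestronglyMeasurable hk1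
  have hp := lintegral_ofReal_eq_one_of_integral_eq_one hp0 hpm.aestronglyMeasurable hp1
  set Λ : EuclideanSpace ℝ (Fin d) → ℝ := fun x => Real.log (max ‖x‖ 1)
  have hΛ0 (x) : 0 ≤ Λ x := Real.log_nonneg (le_max_right _ _)
  have hΛm : Measurable Λ := Real.measurable_log.comp (measurable_norm.max measurable_const)
  have key := lintegral_lintegral_sub_mul_mul_le (μ := volume) hkm.ennreal_ofReal
    hpm.ennreal_ofReal hΛm.ennreal_ofReal measurable_norm.ennreal_ofReal fun x y => by
      rw [← ENNReal.ofReal_add (hΛ0 y) (norm_nonneg _)]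
      exact ENNReal.ofReal_le_ofReal (Real.log_max_norm_one_le x y)
  simp only [hk, hp, one_mul, mul_one, ← ENNReal.ofReal_mul (hp0 _),
    ← ENNReal.ofReal_mul (hk0 _)] at key
  calc _ ≤ ∫⁻ x, (∫⁻ y, ENNReal.ofReal (k (x - y) * p y)) * ENNReal.ofReal (Λ x) := by
        refine lintegral_mono fun x => ?_
        rw [ENNReal.ofReal_mul (integral_nonneg fun y => mul_nonneg (hk0 _) (hp0 _))]
        gcongr
        exact ENNReal.ofReal_integral_le_lintegral_ofReal fun y => mul_nonneg (hk0 _) (hp0 _)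
    _ ≤ _ := by simpa only [mul_comm (k _) ‖_‖] using key

/-- With `Λ(x) = ln(max(|x|,1))`: if `p` is a probability density with
`∫ p·Λ < ∞` and `k` is a nonnegative integrable kernel with `∫ k = 1` and `∫ |y| k(y) dy < ∞`,
then `∫ (p * k)·Λ ≤ ∫ p·Λ + ∫ |y| k(y) dy`, where `(p*k)(x) = ∫ k(x−y) p(y) dy`. -/
theorem stmt_14 (d : ℕ)
    (p k : EuclideanSpace ℝ (Fin d) → ℝ)
    (hpm : Measurable p) (hkm : Measurable k)
    (hp0 : ∀ x, 0 ≤ p x) (hk0 : ∀ y, 0 ≤ k y)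
    (hpi : Integrable p) (hp1 : (∫ x, p x) = 1)
    (hki : Integrable k) (hk1 : (∫ y, k y) = 1)
    (hpΛ : (∫⁻ x, ENNReal.ofReal (p x * Real.log (max ‖x‖ 1))) < ⊤)
    (hkmom : (∫⁻ y, ENNReal.ofReal (‖y‖ * k y)) < ⊤) :
    (∫⁻ x, ENNReal.ofReal ((∫ y, k (x - y) * p y) * Real.log (max ‖x‖ 1))) ≤
      (∫⁻ x, ENNReal.ofReal (p x * Real.log (max ‖x‖ 1))) +
      ∫⁻ y, ENNReal.ofReal (‖y‖ * k y) :=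
  stmt_14_general d p k hpm hkm hp0 hk0 hp1 hk1
end

section
/- Suppose p : [0,T] × ℝ^d → (0,∞) is smooth and positive, for every t the function p(t,·) is a probability density, and set θ(t,x) = φ(p(t,x)) + Φ(x). Then ∫₀^T ∫_{ℝ^d} (2f(p(t,x))/p(t,x))·|∇θ(t,x)|²·p(t,x) dx dt ≤ 4 ∫₀^T ∫_{ℝ^d} (γ₂³·|∇p(t,x)|²/(b₀²·p(t,x)) + γ₂·|∇Φ(x)|²·p(t,x)) dx dt. In particular, if ∫₀^T∫ |∇p|²/p dx dt < ∞ and ∫₀^T∫ |∇Φ|² p dx dt < ∞, then the left-hand side is finite. -/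
open MeasureTheory
open scoped ENNReal

/-! With `h w = f' w / (w b w)`, so that `0 ≤ h w ≤ (γ₂ / b₀) / w`, one has `g = ∫₁ h` and
`u² φ' u = k u` where `k r = r g r - η r`. Since `k' r = r h r ∈ [0, γ₂ / b₀]` and `k r → 0` as
`r → 0⁺` (because `|g r| ≤ (γ₂ / b₀) |log r|`), we get `0 ≤ u φ' u ≤ γ₂ / b₀`. Then
`∇θ = φ'(p) ∇p + ∇Φ`, `f p ≤ γ₂ p` and `|a + b|² ≤ 2|a|² + 2|b|²` give the inequality pointwise,
and it is integrated. -/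

open Set Filter Topology Real intervalIntegral InnerProductSpace

section Gradient

variable {F : Type*} [NormedAddCommGroup F] [InnerProductSpace ℝ F] [CompleteSpace F]
  {p q : F → ℝ} {P Q x : F}

theorem HasDerivAt.comp_hasGradientAt {φ : ℝ → ℝ} {c : ℝ} (hφ : HasDerivAt φ c (p x))
    (hp : HasGradientAt p P x) : HasGradientAt (fun y => φ (p y)) (c • P) x := by
  rw [hasGradientAt_iff_hasFDerivAt, map_smul]
  exact hφ.comp_hasFDerivAt x hp.hasFDerivAt

theorem HasGradientAt.add (hp : HasGradientAt p P x) (hq : HasGradientAt q Q x) :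
    HasGradientAt (fun y => p y + q y) (P + Q) x := by
  rw [hasGradientAt_iff_hasFDerivAt, map_add]
  exact hp.hasFDerivAt.add hq.hasFDerivAt

end Gradient

theorem uIcc_subset_Ioi_zero {a b : ℝ} (ha : 0 < a) (hb : 0 < b) : uIcc a b ⊆ Ioi 0 :=
  fun _ hx => (lt_min ha hb).trans_le hx.1

section PrimitiveOfPrimitive

variable {h : ℝ → ℝ} {C : ℝ}

theorem hasDerivAt_integral_one (hh : ContinuousOn h (Ioi 0)) {s : ℝ} (hs : 0 < s) :
    HasDerivAt (fun s => ∫ w in (1:ℝ)..s, h w) (h s) s :=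
  integral_hasDerivAt_right ((hh.mono (uIcc_subset_Ioi_zero one_pos hs)).intervalIntegrable)
    (hh.stronglyMeasurableAtFilter isOpen_Ioi s hs) (hh.continuousAt (Ioi_mem_nhds hs))

theorem abs_integral_one_le_mul_abs_log (hh₀ : ∀ w, 0 < w → 0 ≤ h w)
    (hhC : ∀ w, 0 < w → w * h w ≤ C) {s : ℝ} (hs : 0 < s) :
    |∫ w in (1:ℝ)..s, h w| ≤ C * |log s| := by
  have hC : 0 ≤ C := (hh₀ 1 one_pos).trans (by simpa using hhC 1 one_pos)
  have h0 : (0:ℝ) ∉ uIcc 1 s := fun h0 => lt_irrefl (0:ℝ) (uIcc_subset_Ioi_zero one_pos hs h0)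
  have hbound : ∀ᵐ w ∂volume.restrict (uIoc 1 s), ‖h w‖ ≤ C * w⁻¹ := by
    refine (ae_restrict_iff' measurableSet_uIoc).2 (ae_of_all _ fun w hw => ?_)
    have hw₀ : 0 < w := uIcc_subset_Ioi_zero one_pos hs (uIoc_subset_uIcc hw)
    rw [Real.norm_of_nonneg (hh₀ w hw₀), ← div_eq_mul_inv, le_div_iff₀ hw₀, mul_comm]
    exact hhC w hw₀
  calc |∫ w in (1:ℝ)..s, h w| ≤ |∫ w in (1:ℝ)..s, C * w⁻¹| :=
        norm_integral_le_abs_of_norm_le hbound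
          ((intervalIntegrable_inv_iff.2 (Or.inr h0)).const_mul C)
    _ = C * |log s| := by
        rw [intervalIntegral.integral_const_mul, integral_inv h0, div_one, abs_mul,
          abs_of_nonneg hC]

theorem continuousOn_integral_one (hh : ContinuousOn h (Ioi 0)) :
    ContinuousOn (fun s => ∫ w in (1:ℝ)..s, h w) (Ioi 0) :=
  fun _ hs => (hasDerivAt_integral_one hh hs).continuousAt.continuousWithinAt

theorem intervalIntegrable_integral_one (hh : ContinuousOn h (Ioi 0))
    (hh₀ : ∀ w, 0 < w → 0 ≤ h w) (hhC : ∀ w, 0 < w → w * h w ≤ C) {r : ℝ} (hr : 0 < r) :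
    IntervalIntegrable (fun s => ∫ w in (1:ℝ)..s, h w) volume 0 r := by
  have hsub : uIoc 0 r ⊆ Ioi 0 := by
    rw [uIoc_of_le hr.le]
    exact Ioc_subset_Ioi_self
  refine (intervalIntegrable_log'.const_mul C).mono_fun
    (((continuousOn_integral_one hh).mono hsub).aestronglyMeasurable measurableSet_uIoc)
    ((ae_restrict_iff' measurableSet_uIoc).2 (ae_of_all _ fun s hs => ?_))
  dsimp only
  rw [norm_mul]
  exact (abs_integral_one_le_mul_abs_log hh₀ hhC (hsub hs)).trans
    (mul_le_mul_of_nonneg_right (le_abs_self C) (abs_nonneg _))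

theorem tendsto_mul_integral_one_nhdsGE_zero (hh₀ : ∀ w, 0 < w → 0 ≤ h w)
    (hhC : ∀ w, 0 < w → w * h w ≤ C) :
    Tendsto (fun r => r * ∫ w in (1:ℝ)..r, h w) (𝓝[≥] 0) (𝓝 0) := by
  have hlim : Tendsto (fun r => C * |r * log r|) (𝓝[≥] 0) (𝓝 0) := by
    simpa using ((continuous_mul_log.abs.const_mul C).tendsto 0).mono_left nhdsWithin_le_nhds
  refine squeeze_zero_norm' ?_ hlim
  filter_upwards [self_mem_nhdsWithin] with r (hr : 0 ≤ r)
  rcases hr.eq_or_lt with rfl | hr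
  · simp
  rw [norm_mul, abs_mul, Real.norm_of_nonneg hr.le, abs_of_pos hr, mul_left_comm]
  exact mul_le_mul_of_nonneg_left (abs_integral_one_le_mul_abs_log hh₀ hhC hr) hr.le

theorem exists_hasDerivAt_primitive_div_self (hh : ContinuousOn h (Ioi 0))
    (hh₀ : ∀ w, 0 < w → 0 ≤ h w) (hhC : ∀ w, 0 < w → w * h w ≤ C) {u : ℝ} (hu : 0 < u) :
    ∃ c, HasDerivAt (fun u => (∫ s in (0:ℝ)..u, ∫ w in (1:ℝ)..s, h w) / u) c u ∧
      0 ≤ c ∧ c * u ≤ C := by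
  set g := fun s => ∫ w in (1:ℝ)..s, h w
  set η := fun r => ∫ s in (0:ℝ)..r, g s
  have hη : ∀ r, 0 < r → HasDerivAt η (g r) r := fun r hr =>
    integral_hasDerivAt_right (intervalIntegrable_integral_one hh hh₀ hhC hr)
      ((continuousOn_integral_one hh).stronglyMeasurableAtFilter isOpen_Ioi r hr)
      (hasDerivAt_integral_one hh hr).continuousAt
  set k := fun r => r * g r - η r
  have hk : ∀ r, 0 < r → HasDerivAt k (r * h r) r := fun r hr =>
    (((hasDerivAt_id' r).mul (hasDerivAt_integral_one hh hr)).sub (hη r hr)).congr_deriv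
      (by ring)
  have hk_cont : ContinuousOn k (Ici 0) := by
    intro r (hr : 0 ≤ r)
    rcases hr.eq_or_lt with rfl | hr
    · have hη_cont : ContinuousWithinAt η (Ici 0) 0 :=
        (continuousOn_primitive_interval' (intervalIntegrable_integral_one hh hh₀ hhC one_pos)
          left_mem_uIcc 0 left_mem_uIcc).mono_of_mem_nhdsWithin
          (by simpa [uIcc_of_le zero_le_one] using Icc_mem_nhdsGE one_pos)
      simpa [ContinuousWithinAt, k, η] using
        (tendsto_mul_integral_one_nhdsGE_zero hh₀ hhC).sub hη_cont
    · exact (hk r hr).continuousAt.continuousWithinAt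
  have hk_diff : DifferentiableOn ℝ k (interior (Ici 0)) := by
    rw [interior_Ici]
    exact fun r hr => (hk r hr).differentiableAt.differentiableWithinAt
  have hk_lower : 0 * (u - 0) ≤ k u - k 0 :=
    (convex_Ici 0).mul_sub_le_image_sub_of_le_deriv hk_cont hk_diff
      (by rw [interior_Ici]; exact fun r hr => (hk r hr).deriv ▸ mul_nonneg hr.le (hh₀ r hr))
      0 self_mem_Ici u hu.le hu.le
  have hk_upper : k u - k 0 ≤ C * (u - 0) :=
    (convex_Ici 0).image_sub_le_mul_sub_of_deriv_le hk_cont hk_diff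
      (by rw [interior_Ici]; exact fun r hr => (hk r hr).deriv ▸ hhC r hr)
      0 self_mem_Ici u hu.le hu.le
  have hk₀ : k 0 = 0 := by simp [k, η]
  rw [hk₀, sub_zero, sub_zero] at hk_lower hk_upper
  refine ⟨k u / u ^ 2, ((hη u hu).div (hasDerivAt_id' u) hu.ne').congr_deriv (by simp [k]; ring),
    div_nonneg (by linarith) (sq_nonneg u), ?_⟩
  rw [sq, ← div_div, div_mul_cancel₀ _ hu.ne', div_le_iff₀ hu]
  linarith

end PrimitiveOfPrimitive

theorem exists_hasDerivAt_primitive_div_mul_div_self {a b : ℝ → ℝ} {γ b₀ : ℝ}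
    (ha : Continuous a) (hb : Continuous b) (ha₀ : ∀ w, 0 ≤ a w) (haγ : ∀ w, a w ≤ γ)
    (hb₀ : 0 < b₀) (hbb₀ : ∀ w, b₀ ≤ b w) {u : ℝ} (hu : 0 < u) :
    ∃ c, HasDerivAt (fun u => (∫ s in (0:ℝ)..u, ∫ w in (1:ℝ)..s, a w / (w * b w)) / u) c u ∧
      0 ≤ c ∧ c * u ≤ γ / b₀ := by
  have hb_pos : ∀ w, 0 < b w := fun w => hb₀.trans_le (hbb₀ w)
  refine exists_hasDerivAt_primitive_div_self (h := fun w => a w / (w * b w))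
    (ha.continuousOn.div (continuousOn_id.mul hb.continuousOn)
      fun w hw => (mul_pos hw (hb_pos w)).ne')
    (fun w hw => div_nonneg (ha₀ w) (mul_pos hw (hb_pos w)).le) (fun w hw => ?_) hu
  rw [mul_div_assoc', mul_div_mul_left _ _ hw.ne']
  exact div_le_div₀ ((ha₀ w).trans (haγ w)) (haγ w) hb₀ (hbb₀ w)

theorem two_mul_div_mul_norm_smul_add_sq_mul_le {E : Type*} [SeminormedAddCommGroup E]
    [NormedSpace ℝ E] (P G : E) {F u c γ b₀ : ℝ} (hu : 0 < u) (hγ : 0 ≤ γ) (hF : F ≤ γ * u)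
    (hc : 0 ≤ c) (hcu : c * u ≤ γ / b₀) :
    2 * F / u * ‖c • P + G‖ ^ 2 * u ≤
      4 * (γ ^ 3 * ‖P‖ ^ 2 / (b₀ ^ 2 * u) + γ * ‖G‖ ^ 2 * u) := by
  have hsq : ‖c • P + G‖ ^ 2 ≤ 2 * (c ^ 2 * ‖P‖ ^ 2 + ‖G‖ ^ 2) :=
    calc ‖c • P + G‖ ^ 2 ≤ (c * ‖P‖ + ‖G‖) ^ 2 := by
          gcongr
          simpa [norm_smul, abs_of_nonneg hc] using norm_add_le (c • P) G
      _ ≤ 2 * ((c * ‖P‖) ^ 2 + ‖G‖ ^ 2) := add_sq_le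
      _ = 2 * (c ^ 2 * ‖P‖ ^ 2 + ‖G‖ ^ 2) := by ring
  have hcu_sq : (c * u) ^ 2 ≤ (γ / b₀) ^ 2 := pow_le_pow_left₀ (by positivity) hcu 2
  calc 2 * F / u * ‖c • P + G‖ ^ 2 * u = 2 * F * ‖c • P + G‖ ^ 2 := by field_simp
    _ ≤ 2 * (γ * u) * (2 * (c ^ 2 * ‖P‖ ^ 2 + ‖G‖ ^ 2)) := by gcongr
    _ = 4 * (γ * (c * u) ^ 2 * ‖P‖ ^ 2 / u + γ * ‖G‖ ^ 2 * u) := by field_simp; ring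
    _ ≤ 4 * (γ * (γ / b₀) ^ 2 * ‖P‖ ^ 2 / u + γ * ‖G‖ ^ 2 * u) := by gcongr
    _ = 4 * (γ ^ 3 * ‖P‖ ^ 2 / (b₀ ^ 2 * u) + γ * ‖G‖ ^ 2 * u) := by ring

theorem stmt_15_general (d : ℕ) (T : ℝ)
    (f b : ℝ → ℝ) (γ₁ γ₂ b₀ b₁ : ℝ)
    (hf : ContDiff ℝ (⊤ : ℕ∞) f) (hf0 : f 0 = 0)
    (hγ₁ : 0 < γ₁)
    (hf' : ∀ r, γ₁ ≤ deriv f r ∧ deriv f r ≤ γ₂)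
    (hbsm : ContDiff ℝ (⊤ : ℕ∞) b)
    (hb₀ : 0 < b₀)
    (hbb : ∀ s, b₀ ≤ b s ∧ b s ≤ b₁)
    (Φ : EuclideanSpace ℝ (Fin d) → ℝ)
    (hΦ : ContDiff ℝ (⊤ : ℕ∞) Φ)
    (g η φ : ℝ → ℝ)
    (hg : ∀ s, g s = ∫ w in (1:ℝ)..s, deriv f w / (w * b w))
    (hη : ∀ r, η r = ∫ s in (0:ℝ)..r, g s)
    (hφ : ∀ u, φ u = η u / u)
    (p : ℝ → EuclideanSpace ℝ (Fin d) → ℝ)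
    (hpsm : ContDiff ℝ (⊤ : ℕ∞) (fun q : ℝ × EuclideanSpace ℝ (Fin d) => p q.1 q.2))
    (hppos : ∀ t x, 0 < p t x)
    (θ : ℝ → EuclideanSpace ℝ (Fin d) → ℝ)
    (hθ : ∀ t x, θ t x = φ (p t x) + Φ x) :
    (∫⁻ t in Set.Icc (0:ℝ) T, ∫⁻ x,
        ENNReal.ofReal (2 * f (p t x) / p t x * ‖gradient (θ t) x‖ ^ 2 * p t x)) ≤
      4 * ∫⁻ t in Set.Icc (0:ℝ) T, ∫⁻ x,
        ENNReal.ofReal (γ₂ ^ 3 * ‖gradient (p t) x‖ ^ 2 / (b₀ ^ 2 * p t x) +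
          γ₂ * ‖gradient Φ x‖ ^ 2 * p t x) := by
  have hγ₂ : 0 ≤ γ₂ := hγ₁.le.trans ((hf' 0).1.trans (hf' 0).2)
  have hf_le : ∀ u, 0 ≤ u → f u ≤ γ₂ * u := fun u hu => by
    simpa [hf0] using image_sub_le_mul_sub_of_deriv_le (hf.differentiable (by simp))
      (fun r => (hf' r).2) hu
  have hφ_eq : φ = fun u => (∫ s in (0:ℝ)..u, ∫ w in (1:ℝ)..s, deriv f w / (w * b w)) / u := by
    funext u
    simp only [hφ, hη, hg]
  have hp_diff : ∀ t, Differentiable ℝ (p t) := fun t =>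
    (hpsm.differentiable (by simp)).comp ((differentiable_const t).prodMk differentiable_id)
  have key : ∀ t x,
      ENNReal.ofReal (2 * f (p t x) / p t x * ‖gradient (θ t) x‖ ^ 2 * p t x) ≤
        4 * ENNReal.ofReal (γ₂ ^ 3 * ‖gradient (p t) x‖ ^ 2 / (b₀ ^ 2 * p t x) +
          γ₂ * ‖gradient Φ x‖ ^ 2 * p t x) := fun t x => by
    obtain ⟨c, hc, hc₀, hcu⟩ := exists_hasDerivAt_primitive_div_mul_div_self
      (hf.continuous_deriv (by simp)) hbsm.continuous (fun r => hγ₁.le.trans (hf' r).1)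
      (fun r => (hf' r).2) hb₀ (fun s => (hbb s).1) (hppos t x)
    have hθ_grad : gradient (θ t) x = c • gradient (p t) x + gradient Φ x := by
      rw [funext (hθ t), hφ_eq]
      exact ((hc.comp_hasGradientAt (hp_diff t x).hasGradientAt).add
        (hΦ.differentiable (by simp) x).hasGradientAt).gradient
    rw [hθ_grad, ← ENNReal.ofReal_ofNat 4, ← ENNReal.ofReal_mul (by norm_num)]
    exact ENNReal.ofReal_le_ofReal (two_mul_div_mul_norm_smul_add_sq_mul_le _ _ (hppos t x) hγ₂
      (hf_le _ (hppos t x).le) hc₀ hcu)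
  simp_rw [← lintegral_const_mul' 4 _ ENNReal.ofNat_ne_top]
  exact lintegral_mono fun t => lintegral_mono (key t)

/-- For smooth positive `p` with `p(t,·)` a probability density and
`θ(t,x) = φ(p(t,x)) + Φ(x)`,
`∫₀^T ∫ (2f(p)/p)·|∇θ|²·p dx dt ≤ 4 ∫₀^T ∫ (γ₂³|∇p|²/(b₀²p) + γ₂|∇Φ|²p) dx dt`;
stated with lower integrals so that finiteness of the right-hand side gives finiteness
of the left-hand side. -/
theorem stmt_15 (d : ℕ) (T : ℝ) (hT : 0 < T)
    (f b : ℝ → ℝ) (γ₁ γ₂ b₀ b₁ : ℝ)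
    (hf : ContDiff ℝ (⊤ : ℕ∞) f) (hf0 : f 0 = 0) (hfnn : ∀ r, 0 ≤ f r)
    (hγ₁ : 0 < γ₁) (hγ₁₂ : γ₁ < γ₂)
    (hf' : ∀ r, γ₁ ≤ deriv f r ∧ deriv f r ≤ γ₂)
    (hbsm : ContDiff ℝ (⊤ : ℕ∞) b) (hbnn : ∀ s, 0 ≤ b s)
    (hb₀ : 0 < b₀) (hb₀₁ : b₀ < b₁)
    (hbb : ∀ s, b₀ ≤ b s ∧ b s ≤ b₁)
    (Φ : EuclideanSpace ℝ (Fin d) → ℝ)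
    (hΦ : ContDiff ℝ (⊤ : ℕ∞) Φ) (hΦnn : ∀ x, 0 ≤ Φ x)
    (g η φ : ℝ → ℝ)
    (hg : ∀ s, g s = ∫ w in (1:ℝ)..s, deriv f w / (w * b w))
    (hη : ∀ r, η r = ∫ s in (0:ℝ)..r, g s)
    (hφ : ∀ u, φ u = η u / u)
    (p : ℝ → EuclideanSpace ℝ (Fin d) → ℝ)
    (hpsm : ContDiff ℝ (⊤ : ℕ∞) (fun q : ℝ × EuclideanSpace ℝ (Fin d) => p q.1 q.2))
    (hppos : ∀ t x, 0 < p t x)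
    (hdens : ∀ t ∈ Set.Icc (0:ℝ) T, (∫ x, p t x) = 1)
    (θ : ℝ → EuclideanSpace ℝ (Fin d) → ℝ)
    (hθ : ∀ t x, θ t x = φ (p t x) + Φ x) :
    (∫⁻ t in Set.Icc (0:ℝ) T, ∫⁻ x,
        ENNReal.ofReal (2 * f (p t x) / p t x * ‖gradient (θ t) x‖ ^ 2 * p t x)) ≤
      4 * ∫⁻ t in Set.Icc (0:ℝ) T, ∫⁻ x,
        ENNReal.ofReal (γ₂ ^ 3 * ‖gradient (p t) x‖ ^ 2 / (b₀ ^ 2 * p t x) +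
          γ₂ * ‖gradient Φ x‖ ^ 2 * p t x) :=
  stmt_15_general d T f b γ₁ γ₂ b₀ b₁ hf hf0 hγ₁ hf' hbsm hb₀ hbb Φ hΦ g η φ hg hη hφ p hpsm hppos θ
    hθ
end
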